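/- For x ≥ 0 and d > 0, define J_{x,d}(h) := (1/d) ∫_0^d h(x+u) du on H_w. Then J_{x,d} = I_d ∘ S_x is a bounded linear functional on H_w, and its Riesz representative h_{x,d} ∈ H_w is given piecewise by: h_{x,d}(y) = 1 + ∫_0^y 1/w(s) ds for 0 ≤ y ≤ x; h_{x,d}(y) = 1 + ∫_0^x 1/w(s) ds + ∫_0^{y−x} (d−s)/(d·w(s+x)) ds for x < y ≤ x+d; and h_{x,d}(y) = 1 + ∫_0^x 1/w(s) ds + ∫_0^d (d−s)/(d·w(s+x)) ds for y > x+d. Equivalently, h_{x,d} = S_x^*(h_d^I). -/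

import Mathlib

open MeasureTheory Real Set

/-- A Filipović weight function: measurable, increasing on `[0,∞)`, `w(0)=1`,
`w ≥ 1`, and `∫_0^∞ 1/w < ∞`. -/
structure FiliWeight (w : ℝ → ℝ) : Prop where
  meas : Measurable w
  mono : MonotoneOn w (Set.Ici 0)
  one_le : ∀ x, 0 ≤ x → 1 ≤ w x
  at_zero : w 0 = 1
  int_inv : MeasureTheory.IntegrableOn (fun s => (w s)⁻¹) (Set.Ioi 0)

/-- Membership of `h` (with weak derivative `h'`) in the Filipović space `H_w`:
`h` is absolutely continuous on `[0,∞)` with derivative `h'` and finite weighted energy. -/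
structure FiliMem (w : ℝ → ℝ) (h h' : ℝ → ℝ) : Prop where
  meas_deriv : Measurable h'
  abs_cont : ∀ x, 0 ≤ x → h x = h 0 + ∫ s in (0:ℝ)..x, h' s
  energy : MeasureTheory.IntegrableOn (fun y => (h' y)^2 * w y) (Set.Ioi 0)

/-- The inner product `⟨f,g⟩_w = f(0)g(0) + ∫_0^∞ f'(y)g'(y) w(y) dy` on `H_w`. -/
noncomputable def filiInner (w f g f' g' : ℝ → ℝ) : ℝ :=
  f 0 * g 0 + ∫ y in Set.Ioi (0:ℝ), f' y * g' y * w y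

/-- The squared norm `‖f‖_w^2 = |f(0)|^2 + ∫_0^∞ |f'(y)|^2 w(y) dy` on `H_w`. -/
noncomputable def filiNormSq (w f f' : ℝ → ℝ) : ℝ :=
  (f 0)^2 + ∫ y in Set.Ioi (0:ℝ), (f' y)^2 * w y

/-- The piecewise function `h_{x,d}` of the paper. -/
noncomputable def hxd (w : ℝ → ℝ) (x d : ℝ) : ℝ → ℝ := fun y =>
  if y ≤ x then 1 + ∫ s in (0:ℝ)..y, (w s)⁻¹
  else (1 + ∫ s in (0:ℝ)..x, (w s)⁻¹) + ∫ s in (0:ℝ)..(min (y - x) d), (d - s) / (d * w (s + x))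

/-- Its weak derivative. -/
noncomputable def hxd' (w : ℝ → ℝ) (x d : ℝ) : ℝ → ℝ := fun y =>
  if y ≤ x then (w y)⁻¹
  else if y ≤ x + d then (d - (y - x)) / (d * w y) else 0

/-!
Writing `h (x + u) = h 0 + ∫_0^{x+u} h'` and averaging over `u ∈ (0, d]`, Fubini turns
`J_{x,d} h` into `h 0 + ∫_0^∞ h' ρ` with `ρ(s) = |(0, d] ∩ (s - x, ∞)| / d`, and `ρ` is exactly
`h_{x,d}' w`; this is `⟨h, h_{x,d}⟩_w`. Boundedness is then Cauchy–Schwarz for `⟨·,·⟩_w`, as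
`(h_{x,d}')² w = ρ² / w ≤ 1 / w` is integrable. The formula `h_{x,d} = S_x^* h_d^I` holds because
the integrand of `S_x^* h_d^I` vanishes beyond `d` and reduces to that of `h_{x,d}` before it.
-/

lemma Integrable.mul_mul_of_sq_mul {α : Type*} [MeasurableSpace α] {μ : Measure α}
    {f g W : α → ℝ} (hf : Integrable (fun y => f y ^ 2 * W y) μ)
    (hg : Integrable (fun y => g y ^ 2 * W y) μ) (hW : ∀ᵐ y ∂μ, 0 ≤ W y)
    (hm : AEStronglyMeasurable (fun y => f y * g y * W y) μ) :
    Integrable (fun y => f y * g y * W y) μ :=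
  ((hf.add hg).div_const 2).mono' hm <| hW.mono fun y hy => by
    rw [norm_eq_abs, abs_mul, abs_mul, abs_of_nonneg hy, Pi.add_apply]
    nlinarith [mul_nonneg (sq_nonneg (|f y| - |g y|)) hy, sq_abs (f y), sq_abs (g y)]

section CauchySchwarz

variable {w f g f' g' : ℝ → ℝ}

lemma filiNormSq_nonneg (hw : ∀ y ∈ Ioi (0:ℝ), 0 ≤ w y) : 0 ≤ filiNormSq w f f' :=
  add_nonneg (sq_nonneg _)
    (setIntegral_nonneg measurableSet_Ioi fun y hy => mul_nonneg (sq_nonneg _) (hw y hy))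

lemma sq_filiInner_le (hw : ∀ y ∈ Ioi (0:ℝ), 0 ≤ w y)
    (hf : IntegrableOn (fun y => f' y ^ 2 * w y) (Ioi 0))
    (hg : IntegrableOn (fun y => g' y ^ 2 * w y) (Ioi 0))
    (hfg : IntegrableOn (fun y => f' y * g' y * w y) (Ioi 0)) :
    filiInner w f g f' g' ^ 2 ≤ filiNormSq w f f' * filiNormSq w g g' := by
  have hquad : ∀ t : ℝ,
      0 ≤ filiNormSq w f f' * (t * t) + 2 * filiInner w f g f' g' * t + filiNormSq w g g' := by
    intro t
    have hexpand : (fun y => (t * f' y + g' y) ^ 2 * w y) = fun y =>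
        t * t * (f' y ^ 2 * w y) + (2 * t * (f' y * g' y * w y) + g' y ^ 2 * w y) := by
      funext y; ring
    have hnorm : filiNormSq w (fun y => t * f y + g y) (fun y => t * f' y + g' y)
        = filiNormSq w f f' * (t * t) + 2 * filiInner w f g f' g' * t + filiNormSq w g g' := by
      have hsum : IntegrableOn (fun y => 2 * t * (f' y * g' y * w y) + g' y ^ 2 * w y) (Ioi 0) :=
        (hfg.const_mul _).add hg
      simp only [filiNormSq, filiInner]
      rw [hexpand, integral_add (hf.const_mul _) hsum,
        integral_add (hfg.const_mul _) hg, integral_const_mul, integral_const_mul]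
      ring
    exact hnorm ▸ filiNormSq_nonneg hw
  have hdiscrim := discrim_le_zero hquad
  rw [discrim] at hdiscrim
  nlinarith

lemma abs_filiInner_le (hw : ∀ y ∈ Ioi (0:ℝ), 0 ≤ w y)
    (hf : IntegrableOn (fun y => f' y ^ 2 * w y) (Ioi 0))
    (hg : IntegrableOn (fun y => g' y ^ 2 * w y) (Ioi 0))
    (hfg : IntegrableOn (fun y => f' y * g' y * w y) (Ioi 0)) :
    |filiInner w f g f' g'| ≤ √(filiNormSq w f f') * √(filiNormSq w g g') := by
  rw [← sqrt_mul (filiNormSq_nonneg hw)]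
  exact abs_le_sqrt (sq_filiInner_le hw hf hg hfg)

end CauchySchwarz

lemma FiliWeight.pos {w : ℝ → ℝ} (hw : FiliWeight w) {y : ℝ} (hy : 0 ≤ y) : 0 < w y :=
  one_pos.trans_le (hw.one_le y hy)

lemma FiliWeight.nonneg_on_Ioi {w : ℝ → ℝ} (hw : FiliWeight w) : ∀ y ∈ Ioi (0:ℝ), 0 ≤ w y :=
  fun _ hy => (hw.pos (le_of_lt hy)).le

lemma FiliWeight.ae_nonneg {w : ℝ → ℝ} (hw : FiliWeight w) :
    ∀ᵐ y ∂(volume.restrict (Ioi (0:ℝ))), 0 ≤ w y :=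
  (ae_restrict_iff' measurableSet_Ioi).2 (ae_of_all _ hw.nonneg_on_Ioi)

/-- Cauchy–Schwarz against `1/w`: `∫ |h'| ≤ (∫ h'² w)^{1/2} (∫ 1/w)^{1/2}`. -/
lemma FiliMem.integrableOn_deriv {w h h' : ℝ → ℝ} (hw : FiliWeight w) (hh : FiliMem w h h') :
    IntegrableOn h' (Ioi 0) := by
  have hinv : IntegrableOn (fun y => (w y)⁻¹ ^ 2 * w y) (Ioi 0) :=
    hw.int_inv.congr_fun (fun y hy => by field_simp [(hw.pos (le_of_lt hy)).ne']) measurableSet_Ioi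
  have hprod : IntegrableOn (fun y => h' y * (w y)⁻¹ * w y) (Ioi 0) :=
    Integrable.mul_mul_of_sq_mul hh.energy hinv hw.ae_nonneg
      ((hh.meas_deriv.mul hw.meas.inv).mul hw.meas).aestronglyMeasurable
  exact hprod.congr_fun (fun y hy => by field_simp [(hw.pos (le_of_lt hy)).ne']) measurableSet_Ioi

section Fubini

variable {f : ℝ → ℝ} (x d : ℝ)

private lemma integrable_indicator_lt_add (hf : IntegrableOn f (Ioi 0)) :
    Integrable ({p : ℝ × ℝ | p.2 < x + p.1}.indicator fun p => f p.2)
      ((volume.restrict (Ioc 0 d)).prod (volume.restrict (Ioi 0))) := by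
  have hprod := (integrable_const (μ := volume.restrict (Ioc 0 d)) (1 : ℝ)).mul_prod hf
  simp only [one_mul] at hprod
  exact hprod.indicator (measurableSet_lt measurable_snd (measurable_const.add measurable_fst))

private lemma setIntegral_indicator_lt_add (u : ℝ) :
    ∫ s in Ioi 0, {p : ℝ × ℝ | p.2 < x + p.1}.indicator (fun p => f p.2) (u, s)
      = ∫ s in Ioc 0 (x + u), f s := by
  have hslice : ∀ s, {p : ℝ × ℝ | p.2 < x + p.1}.indicator (fun p => f p.2) (u, s)
      = (Iio (x + u)).indicator f s := fun s => by
    simp only [indicator_apply, mem_ofPred_eq, mem_Iio]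
  simp only [hslice]
  rw [setIntegral_indicator measurableSet_Iio, Ioi_inter_Iio, integral_Ioc_eq_integral_Ioo]

lemma integrableOn_setIntegral_Ioc_add (hf : IntegrableOn f (Ioi 0)) :
    IntegrableOn (fun u => ∫ s in Ioc 0 (x + u), f s) (Ioc 0 d) := by
  have hsec := (integrable_indicator_lt_add x d hf).integral_prod_left
  simp only [setIntegral_indicator_lt_add] at hsec
  exact hsec

lemma setIntegral_Ioc_setIntegral_Ioc_add (hf : IntegrableOn f (Ioi 0)) :
    ∫ u in Ioc 0 d, ∫ s in Ioc 0 (x + u), f s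
      = ∫ s in Ioi 0, volume.real (Ioc (max 0 (s - x)) d) * f s := by
  have hslice : ∀ s, ∫ u in Ioc 0 d, {p : ℝ × ℝ | p.2 < x + p.1}.indicator (fun p => f p.2) (u, s)
      = volume.real (Ioc (max 0 (s - x)) d) * f s := fun s => by
    have hind : ∀ u, {p : ℝ × ℝ | p.2 < x + p.1}.indicator (fun p => f p.2) (u, s)
        = (Ioi (s - x)).indicator (fun _ => f s) u := fun u => by
      simp only [indicator_apply, mem_ofPred_eq, mem_Ioi, sub_lt_iff_lt_add']
    simp only [hind]
    rw [setIntegral_indicator measurableSet_Ioi, Ioc_inter_Ioi, setIntegral_const, smul_eq_mul]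
  simp only [← setIntegral_indicator_lt_add x, ← hslice]
  exact integral_integral_swap (integrable_indicator_lt_add x d hf)

end Fubini

lemma intervalIntegral_min_right_eq_of_eq_zero {f : ℝ → ℝ} {a b c : ℝ} (hab : a ≤ b) (hac : a ≤ c)
    (hf : ∀ s, c < s → f s = 0) : ∫ s in a..min b c, f s = ∫ s in a..b, f s := by
  have hcut : (Iic c).indicator f = f := funext fun s => by
    simp only [indicator_apply, mem_Iic]
    split_ifs with hs
    · rfl
    · exact (hf s (not_le.mp hs)).symm
  rw [intervalIntegral.integral_of_le (le_min hab hac), intervalIntegral.integral_of_le hab,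
    show Ioc a (min b c) = Ioc a b ∩ Iic c from (Ioc_inter_Iic a b c).symm,
    ← setIntegral_indicator measurableSet_Iic, hcut]

section Representative

variable {w : ℝ → ℝ} {x d : ℝ}

lemma hxd_zero (hx : 0 ≤ x) : hxd w x d 0 = 1 := by
  simp only [hxd, if_pos hx, intervalIntegral.integral_same, add_zero]

lemma hxd'_mul_eq (hd : 0 < d) {y : ℝ} (hy : w y ≠ 0) :
    hxd' w x d y * w y = volume.real (Ioc (max 0 (y - x)) d) / d := by
  rw [volume_real_Ioc]
  simp only [hxd']
  split_ifs with hyx hyxd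
  · rw [max_eq_left (by linarith : y - x ≤ 0), sub_zero, max_eq_left hd.le,
      inv_mul_cancel₀ hy, div_self hd.ne']
  · rw [max_eq_right (by linarith : 0 ≤ y - x), max_eq_left (by linarith : 0 ≤ d - (y - x))]
    field_simp
  · rw [max_eq_right (by linarith : 0 ≤ y - x), max_eq_right (by linarith : d - (y - x) ≤ 0),
      zero_div, zero_mul]

lemma measurable_hxd' (hw : Measurable w) : Measurable (hxd' w x d) :=
  Measurable.ite (measurableSet_le measurable_id measurable_const) hw.inv
    (Measurable.ite (measurableSet_le measurable_id measurable_const)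
      ((measurable_const.sub (measurable_id.sub measurable_const)).div
        (measurable_const.mul hw)) measurable_const)

lemma integrableOn_sq_hxd'_mul (hw : FiliWeight w) (hd : 0 < d) :
    IntegrableOn (fun y => hxd' w x d y ^ 2 * w y) (Ioi 0) := by
  refine hw.int_inv.mono' ((measurable_hxd' hw.meas).pow_const 2 |>.mul hw.meas).aestronglyMeasurable
    ((ae_restrict_iff' measurableSet_Ioi).2 (ae_of_all _ fun y (hy : 0 < y) => ?_))
  have hwy := hw.pos (le_of_lt hy)
  have hρ : 0 ≤ volume.real (Ioc (max 0 (y - x)) d) / d ∧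
      volume.real (Ioc (max 0 (y - x)) d) / d ≤ 1 := by
    rw [volume_real_Ioc, div_le_one hd]
    exact ⟨div_nonneg (le_max_right _ _) hd.le, max_le (by linarith [le_max_left 0 (y - x)]) hd.le⟩
  have hsq : hxd' w x d y ^ 2 * w y = (hxd' w x d y * w y) ^ 2 * (w y)⁻¹ := by
    field_simp
  rw [norm_eq_abs, abs_of_nonneg (mul_nonneg (sq_nonneg _) hwy.le), hsq, hxd'_mul_eq hd hwy.ne']
  exact mul_le_of_le_one_left (inv_nonneg.2 hwy.le) (pow_le_one₀ hρ.1 hρ.2)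

theorem average_shift_eq_filiInner (hw : FiliWeight w) (hx : 0 ≤ x) (hd : 0 < d)
    {h h' : ℝ → ℝ} (hh : FiliMem w h h') :
    (1 / d) * ∫ u in (0:ℝ)..d, h (x + u) = filiInner w h (hxd w x d) h' (hxd' w x d) := by
  have hint := hh.integrableOn_deriv hw
  have hshift : ∀ u ∈ Ioc 0 d, h (x + u) = h 0 + ∫ s in Ioc 0 (x + u), h' s := fun u hu => by
    rw [hh.abs_cont _ (by linarith [hu.1]), intervalIntegral.integral_of_le (by linarith [hu.1])]
  have hkernel : ∀ s ∈ Ioi (0:ℝ), volume.real (Ioc (max 0 (s - x)) d) * h' s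
      = d * (h' s * hxd' w x d s * w s) := fun s hs => by
    rw [mul_assoc, hxd'_mul_eq hd (hw.pos (le_of_lt hs)).ne']
    field_simp
  rw [intervalIntegral.integral_of_le hd.le, setIntegral_congr_fun measurableSet_Ioc hshift,
    integral_add (integrable_const (h 0)) (integrableOn_setIntegral_Ioc_add x d hint),
    setIntegral_const, setIntegral_Ioc_setIntegral_Ioc_add x d hint,
    setIntegral_congr_fun measurableSet_Ioi hkernel, integral_const_mul, filiInner, hxd_zero hx,
    volume_real_Ioc, sub_zero, max_eq_left hd.le, smul_eq_mul]
  field_simp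

theorem hxd_eq_shift_adjoint (hw : FiliWeight w) (hd : 0 < d) (y : ℝ) :
    hxd w x d y = (1 + ∫ s in (0:ℝ)..(min y x), (w s)⁻¹)
      + ∫ s in (0:ℝ)..(max (y - x) 0), (w s / w (s + x)) * ((d - min s d) / (d * w s)) := by
  rcases le_or_gt y x with hyx | hxy
  · simp only [hxd, if_pos hyx, min_eq_left hyx, max_eq_right (sub_nonpos.2 hyx),
      intervalIntegral.integral_same, add_zero]
  · have hvanish : ∀ s, d < s → (w s / w (s + x)) * ((d - min s d) / (d * w s)) = 0 :=
      fun s hs => by rw [min_eq_right hs.le, sub_self, zero_div, mul_zero]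
    rw [hxd, if_neg hxy.not_ge, min_eq_right hxy.le, max_eq_left (sub_nonneg.2 hxy.le),
      ← intervalIntegral_min_right_eq_of_eq_zero (sub_nonneg.2 hxy.le) hd.le hvanish]
    congr 1
    refine intervalIntegral.integral_congr fun s hs => ?_
    rw [uIcc_of_le (le_min (sub_nonneg.2 hxy.le) hd.le)] at hs
    have hws := (hw.pos hs.1).ne'
    simp only [min_eq_left (hs.2.trans (min_le_right _ _))]
    field_simp

end Representative

/-- `J_{x,d}(h) = (1/d)∫_0^d h(x+u) du = I_d(S_x h)` is a bounded linear
functional on `H_w` with Riesz representative the piecewise function `h_{x,d}`: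
`J_{x,d}(h) = ⟨h, h_{x,d}⟩_w`, where `h_{x,d} = S_x^*(h_d^I)` (the shift-adjoint
applied to the representative of `I_d`), and `h_{x,d}` has the stated piecewise form. -/
theorem statement6 (w : ℝ → ℝ) (hw : FiliWeight w) (x : ℝ) (hx : 0 ≤ x)
    (d : ℝ) (hd : 0 < d) :
    (∀ h h' : ℝ → ℝ, FiliMem w h h' →
      (1 / d) * ∫ u in (0:ℝ)..d, h (x + u)
        = filiInner w h (hxd w x d) h' (hxd' w x d)) ∧
    (∃ C : ℝ, 0 ≤ C ∧ ∀ h h' : ℝ → ℝ, FiliMem w h h' →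
      |(1 / d) * ∫ u in (0:ℝ)..d, h (x + u)| ≤ C * Real.sqrt (filiNormSq w h h')) ∧
    (∀ y : ℝ, 0 ≤ y →
      hxd w x d y
        = (1 + ∫ s in (0:ℝ)..(min y x), (w s)⁻¹)
          + ∫ s in (0:ℝ)..(max (y - x) 0), (w s / w (s + x)) * ((d - min s d) / (d * w s))) := by
  refine ⟨fun h h' hh => average_shift_eq_filiInner hw hx hd hh,
    ⟨√(filiNormSq w (hxd w x d) (hxd' w x d)), sqrt_nonneg _, fun h h' hh => ?_⟩,
    fun y _ => hxd_eq_shift_adjoint hw hd y⟩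
  have henergy : IntegrableOn (fun y => hxd' w x d y ^ 2 * w y) (Ioi 0) :=
    integrableOn_sq_hxd'_mul hw hd
  have hinner : IntegrableOn (fun y => h' y * hxd' w x d y * w y) (Ioi 0) :=
    Integrable.mul_mul_of_sq_mul hh.energy henergy hw.ae_nonneg
      ((hh.meas_deriv.mul (measurable_hxd' hw.meas)).mul hw.meas).aestronglyMeasurable
  rw [average_shift_eq_filiInner hw hx hd hh, mul_comm]
  exact abs_filiInner_le hw.nonneg_on_Ioi hh.energy henergy hinner
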